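/- Let N ≥ 2, b > c > 0, and integers s₀, s₁ ≥ 0 with s₀ + s₁ = N. The average per-user expected one-period payoff under the fair plan equals (b-c)·(s₀ + s₁(s₁-1)/(N-1))/N, and the welfare loss relative to the social optimum satisfies (b-c) - (b-c)·(s₀ + s₁(s₁-1)/(N-1))/N = (b-c)·s₀·s₁ / (N·(N-1)). In particular the loss is zero if and only if s₀ = 0 or s₁ = 0. -/

import Mathlib

/-!
Everything is rational-function algebra once `N` is replaced by `s₀ + s₁`: the `b`-terms of the
average cancel because `s₀(s₀ - 1) - s₁(s₁ - 1) = (s₀ - s₁)(N - 1)`, and the loss numerator is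
`N(N - 1) - s₀(N - 1) - s₁(s₁ - 1) = s₁(N - s₁) = s₀ s₁`.
-/

namespace FairPlan

variable {K : Type*} [Field K]

lemma average_payoff_eq {N s₀ s₁ : K} (b c : K) (hsum : s₀ + s₁ = N) (hN₁ : N - 1 ≠ 0) :
    (s₁ * (b - (s₁ - 1) / (N - 1) * c) + s₀ * ((s₀ - 1) / (N - 1) * b - c)) / N
      = (b - c) * (s₀ + s₁ * (s₁ - 1) / (N - 1)) / N := by
  rw [← hsum] at hN₁ ⊢
  congr 1
  field_simp
  ring

lemma welfare_loss_eq {N s₀ s₁ : K} (b c : K) (hsum : s₀ + s₁ = N) (hN : N ≠ 0)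
    (hN₁ : N - 1 ≠ 0) :
    (b - c) - (b - c) * (s₀ + s₁ * (s₁ - 1) / (N - 1)) / N
      = (b - c) * s₀ * s₁ / (N * (N - 1)) := by
  rw [← hsum] at hN hN₁ ⊢
  field_simp
  ring

lemma welfare_loss_eq_zero_iff {N s₀ s₁ b c : K} (hbc : b ≠ c) (hN : N ≠ 0) (hN₁ : N - 1 ≠ 0) :
    (b - c) * s₀ * s₁ / (N * (N - 1)) = 0 ↔ s₀ = 0 ∨ s₁ = 0 := by
  simp [div_eq_zero_iff, mul_eq_zero, sub_eq_zero, hbc, hN, hN₁]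

end FairPlan

open FairPlan in
theorem fair_plan_welfare_loss_general (N s₀ s₁ : ℕ) (b c : ℝ)
    (hN : 2 ≤ N) (hb : c < b) (hsum : s₀ + s₁ = N) :
    ((s₁ : ℝ) * (b - ((s₁ : ℝ) - 1) / ((N : ℝ) - 1) * c)
        + (s₀ : ℝ) * (((s₀ : ℝ) - 1) / ((N : ℝ) - 1) * b - c)) / (N : ℝ)
      = (b - c) * ((s₀ : ℝ) + (s₁ : ℝ) * ((s₁ : ℝ) - 1) / ((N : ℝ) - 1)) / (N : ℝ) ∧
    (b - c) - (b - c) * ((s₀ : ℝ) + (s₁ : ℝ) * ((s₁ : ℝ) - 1) / ((N : ℝ) - 1)) / (N : ℝ)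
      = (b - c) * (s₀ : ℝ) * (s₁ : ℝ) / ((N : ℝ) * ((N : ℝ) - 1)) ∧
    ((b - c) * (s₀ : ℝ) * (s₁ : ℝ) / ((N : ℝ) * ((N : ℝ) - 1)) = 0 ↔ s₀ = 0 ∨ s₁ = 0) := by
  have hsumR : (s₀ : ℝ) + s₁ = N := by exact_mod_cast hsum
  have hN₂ : (2 : ℝ) ≤ N := by exact_mod_cast hN
  have hN₀ : (N : ℝ) ≠ 0 := by linarith
  have hN₁ : (N : ℝ) - 1 ≠ 0 := by linarith
  refine ⟨average_payoff_eq b c hsumR hN₁, welfare_loss_eq b c hsumR hN₀ hN₁, ?_⟩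
  rw [welfare_loss_eq_zero_iff hb.ne' hN₀ hN₁]
  norm_cast

/-- Average per-user payoff under the fair plan and the welfare loss:
the average equals `(b-c)(s₀ + s₁(s₁-1)/(N-1))/N`, the loss relative to the
social optimum equals `(b-c)s₀s₁/(N(N-1))`, and it is zero iff `s₀ = 0` or `s₁ = 0`. -/
theorem fair_plan_welfare_loss (N s₀ s₁ : ℕ) (b c : ℝ)
    (hN : 2 ≤ N) (hc : 0 < c) (hb : c < b) (hsum : s₀ + s₁ = N) :
    ((s₁ : ℝ) * (b - ((s₁ : ℝ) - 1) / ((N : ℝ) - 1) * c)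
        + (s₀ : ℝ) * (((s₀ : ℝ) - 1) / ((N : ℝ) - 1) * b - c)) / (N : ℝ)
      = (b - c) * ((s₀ : ℝ) + (s₁ : ℝ) * ((s₁ : ℝ) - 1) / ((N : ℝ) - 1)) / (N : ℝ) ∧
    (b - c) - (b - c) * ((s₀ : ℝ) + (s₁ : ℝ) * ((s₁ : ℝ) - 1) / ((N : ℝ) - 1)) / (N : ℝ)
      = (b - c) * (s₀ : ℝ) * (s₁ : ℝ) / ((N : ℝ) * ((N : ℝ) - 1)) ∧
    ((b - c) * (s₀ : ℝ) * (s₁ : ℝ) / ((N : ℝ) * ((N : ℝ) - 1)) = 0 ↔ s₀ = 0 ∨ s₁ = 0) :=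
  fair_plan_welfare_loss_general N s₀ s₁ b c hN hb hsum
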